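/- Let B be the 4×4 symmetric matrix over the 2-adic integers ℤ₂ given by B = [[2,1,0,1],[1,2,0,0],[0,0,22,8],[1,0,8,22]] (the even Gram matrix of the quaternary quadratic form with Nipp coefficients [1,1,11,11,1,0,0,1,0,8]), and let B' be the 4×4 symmetric matrix over ℤ₂ given by the block-diagonal matrix [[4,2,0,0],[2,4,0,0],[0,0,116/3,0],[0,0,0,76/29]], where 116/3 = 116·3⁻¹ and 76/29 = 76·29⁻¹ are computed in ℤ₂ (3 and 29 are 2-adic units). Then B and B' are not equivalent over ℤ₂: there is no matrix U ∈ GL₄(ℤ₂) (i.e., a 4×4 matrix over ℤ₂ whose determinant is a unit of ℤ₂) such that Uᵀ · B · U = B'. -/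
import Mathlib


/-- The even Gram matrix over ℤ₂ of the quaternary form with Nipp coefficients
`[1,1,11,11,1,0,0,1,0,8]` (genus 1216#15). -/
noncomputable def NippB : Matrix (Fin 4) (Fin 4) ℤ_[2] :=
  !![2, 1, 0, 1;
     1, 2, 0, 0;
     0, 0, 22, 8;
     1, 0, 8, 22]

/-- The even Gram matrix over ℤ₂ of the claimed (incorrect) 2-adic Jordan splitting
`[2A] + [(58/3)] + [(38/29)]`, with `116/3 = 116·3⁻¹` and `76/29 = 76·29⁻¹` computed
in ℤ₂ (3 and 29 are 2-adic units, so `Ring.inverse` gives their inverses). -/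
noncomputable def NippB' : Matrix (Fin 4) (Fin 4) ℤ_[2] :=
  !![4, 2, 0, 0;
     2, 4, 0, 0;
     0, 0, 116 * Ring.inverse (3 : ℤ_[2]), 0;
     0, 0, 0, 76 * Ring.inverse (29 : ℤ_[2])]

/-- `B` and `B'` are not equivalent over ℤ₂: there is no `U ∈ GL₄(ℤ₂)` with
`Uᵀ · B · U = B'`. -/
theorem nipp_1216_15_not_equivalent :
    ¬ ∃ U : Matrix (Fin 4) (Fin 4) ℤ_[2],
        IsUnit U.det ∧ U.transpose * NippB * U = NippB' := by
  rintro ⟨U, hU, hEq⟩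
  set φ : ℤ_[2] →+* ZMod 2 := PadicInt.toZMod with hφ
  set u : Matrix (Fin 4) (Fin 4) (ZMod 2) := U.map φ with hu
  have hdet : IsUnit u.det := by
    rw [hu, ← RingHom.mapMatrix_apply, ← RingHom.map_det]
    exact hU.map φ
  haveI : Invertible u := u.invertibleOfIsUnitDet hdet
  haveI : Invertible u.transpose := u.transpose.invertibleOfIsUnitDet (by rwa [Matrix.det_transpose])
  have hmap : u.transpose * NippB.map φ * u = NippB'.map φ := by
    rw [hu, ← Matrix.transpose_map, ← Matrix.map_mul, ← Matrix.map_mul, hEq]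
  have e2 : φ (2:ℤ_[2]) = 0 := by rw [map_ofNat]; decide
  have e4 : φ (4:ℤ_[2]) = 0 := by rw [map_ofNat]; decide
  have e116 : φ (116:ℤ_[2]) = 0 := by rw [map_ofNat]; decide
  have e76 : φ (76:ℤ_[2]) = 0 := by rw [map_ofNat]; decide
  have hB'0 : NippB'.map φ = 0 := by
    ext i j
    fin_cases i <;> fin_cases j <;>
      simp [NippB', Matrix.map_apply, map_mul, e2, e4, e116, e76, Matrix.vecHead, Matrix.vecTail]
  have hB0 : NippB.map φ = 0 := by
    have := hmap
    rw [hB'0] at this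
    have h2 : NippB.map φ = ⅟(u.transpose) * (u.transpose * NippB.map φ * u) * ⅟u := by
      rw [← mul_assoc, ← mul_assoc, invOf_mul_self, one_mul, mul_assoc, mul_invOf_self, mul_one]
    rw [h2, this, mul_zero, zero_mul]
  have : (NippB.map φ) 0 1 = 1 := by
    simp [NippB, Matrix.map_apply]
  rw [hB0] at this
  simp at this
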